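/- Let X be a compactum (a compact perfect metric space with more than one point), let n ≥ 2 be an integer, and let f : X → X be a continuous map. If F_n(f) is strongly transitive, then SF_n(f) is strongly transitive; and if SF_n(f) is strongly transitive, then f is strongly transitive. -/

import Mathlib

open Metric Set TopologicalSpace

variable (X : Type*) [MetricSpace X] (n : ℕ)

/-- The `n`-fold symmetric product `F_n(X)`: nonempty subsets of `X` with at most `n`
points, as a subspace of the nonempty compact subsets of `X` with the Hausdorff metric. -/
abbrev Fn := {A : NonemptyCompacts X // (A : Set X).Finite ∧ (A : Set X).ncard ≤ n}

/-- The induced map `F_n(f)` on the `n`-fold symmetric product, `A ↦ f(A)`. -/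
noncomputable def FnMap (f : X → X) : Fn X n → Fn X n := fun A =>
  ⟨⟨⟨f '' (A.1 : Set X), (A.2.1.image f).isCompact⟩, A.1.nonempty.image f⟩,
    A.2.1.image f, le_trans (Set.ncard_image_le A.2.1) A.2.2⟩

/-- `F_1(X) ⊆ F_n(X)`: the set of singletons. -/
def F1 : Set (Fn X n) := {A | ∃ x : X, (A.1 : Set X) = {x}}

/-- The setoid collapsing `F_1(X)` to a point. -/
def SFnSetoid : Setoid (Fn X n) where
  r A B := A = B ∨ (A ∈ F1 X n ∧ B ∈ F1 X n)
  iseqv := by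
    refine ⟨fun _ => Or.inl rfl, fun h => h.imp Eq.symm And.symm, fun h₁ h₂ => ?_⟩
    rcases h₁ with rfl | h₁
    · exact h₂
    · rcases h₂ with rfl | h₂
      · exact Or.inr h₁
      · exact Or.inr ⟨h₁.1, h₂.2⟩

/-- The `n`-fold symmetric product suspension `SF_n(X) = F_n(X)/F_1(X)`,
with the quotient topology. -/
abbrev SFn := Quotient (SFnSetoid X n)

/-- The quotient map `q : F_n(X) → SF_n(X)`. -/
def SFnQ : Fn X n → SFn X n := Quotient.mk (SFnSetoid X n)

/-- The induced map `SF_n(f)` on the suspension, with `SF_n(f) ∘ q = q ∘ F_n(f)`. -/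
noncomputable def SFnMap (f : X → X) : SFn X n → SFn X n :=
  Quotient.lift (fun A => SFnQ X n (FnMap X n f A))
    (fun A B h => Quotient.sound (by
      rcases h with rfl | ⟨⟨x, hx⟩, ⟨y, hy⟩⟩
      · exact Or.inl rfl
      · exact Or.inr ⟨⟨f x, by simp [FnMap, hx]⟩, ⟨f y, by simp [FnMap, hy]⟩⟩))

/-- The metric `ρ` on `SF_n(X)`:
`ρ(χ₁,χ₂) = H(F_1(X) ∪ q⁻¹(χ₁), F_1(X) ∪ q⁻¹(χ₂))` where `H` is the Hausdorff
distance between subsets of `F_n(X)`. -/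
noncomputable def SFnDist : SFn X n → SFn X n → ℝ := fun a b =>
  Metric.hausdorffDist (F1 X n ∪ SFnQ X n ⁻¹' {a}) (F1 X n ∪ SFnQ X n ⁻¹' {b})

/-- `g` is strongly transitive: for every nonempty open `U` there is `M` with
`⋃_{i=1}^{M} g^i(U) = Z`. -/
def StronglyTransitive {Z : Type*} [TopologicalSpace Z] (g : Z → Z) : Prop :=
  ∀ U : Set Z, IsOpen U → U.Nonempty →
    ∃ M : ℕ, 0 < M ∧ (⋃ i ∈ Finset.Icc 1 M, g^[i] '' U) = Set.univ

/-!
Strong transitivity passes to factors, and `SF_n(f)` is a factor of `F_n(f)` through `q`.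
Conversely, for `U ⊆ X` open, the sets of `F_n(X)` inside `U` with at least two points form an
open set `W` (nonempty because `X` is perfect) missing `F_1(X)`, so `q(W)` is open. Finitely many
iterates of `q(W)` cover `SF_n(X)`, in particular each `q{x, z}` with `z ≠ x`; since `q` is
injective off `F_1(X)`, some `f^i(U)` contains `x`.
-/

theorem StronglyTransitive.of_semiconj {Y Z : Type*} [TopologicalSpace Y] [TopologicalSpace Z]
    {π : Y → Z} {g : Y → Y} {h : Z → Z} (hπ : Continuous π) (hπs : Function.Surjective π)
    (hπg : Function.Semiconj π g h) (hg : StronglyTransitive g) : StronglyTransitive h := by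
  intro U hU hUne
  obtain ⟨M, hM, hcov⟩ := hg (π ⁻¹' U) (hU.preimage hπ) (hUne.preimage hπs)
  refine ⟨M, hM, eq_univ_of_forall fun z => ?_⟩
  obtain ⟨y, rfl⟩ := hπs z
  have hy : y ∈ ⋃ i ∈ Finset.Icc 1 M, g^[i] '' (π ⁻¹' U) := hcov ▸ mem_univ y
  simp only [mem_iUnion] at hy ⊢
  obtain ⟨i, hi, y', hy', rfl⟩ := hy
  exact ⟨i, hi, π y', hy', (hπg.iterate_right i y').symm⟩

section

variable {X n}

theorem semiconj_SFnQ_FnMap (f : X → X) :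
    Function.Semiconj (SFnQ X n) (FnMap X n f) (SFnMap X n f) := fun _ => rfl

theorem FnMap_iterate_coe (f : X → X) (i : ℕ) (A : Fn X n) :
    (((FnMap X n f)^[i] A).1 : Set X) = f^[i] '' (A.1 : Set X) := by
  have hc : Function.Semiconj (fun A : Fn X n => (A.1 : Set X)) (FnMap X n f) (image f) :=
    fun _ => rfl
  rw [image_iterate_eq]
  exact hc.iterate_right i A

theorem isClosed_F1 : IsClosed (F1 X n) := by
  have hF1 : F1 X n = Subtype.val ⁻¹' range ({·} : X → NonemptyCompacts X) := by
    ext A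
    simp only [F1, mem_ofPred_eq, mem_preimage, mem_range, eq_comm (b := A.1),
      NonemptyCompacts.ext_iff, NonemptyCompacts.coe_singleton]
  rw [hF1]
  exact NonemptyCompacts.isClosedEmbedding_singleton.isClosed_range.preimage continuous_subtype_val

theorem isOpen_setOf_coe_subset {U : Set X} (hU : IsOpen U) :
    IsOpen {A : Fn X n | (A.1 : Set X) ⊆ U} :=
  (NonemptyCompacts.isOpen_subsets_of_isOpen hU).preimage continuous_subtype_val

theorem eq_of_SFnQ_eq {A B : Fn X n} (hA : A ∉ F1 X n) (hAB : SFnQ X n A = SFnQ X n B) :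
    A = B :=
  (Quotient.exact hAB).resolve_right fun h => hA h.1

theorem isOpen_SFnQ_image {W : Set (Fn X n)} (hW : IsOpen W) (hWF1 : Disjoint W (F1 X n)) :
    IsOpen (SFnQ X n '' W) := by
  have hsat : SFnQ X n ⁻¹' (SFnQ X n '' W) = W := by
    refine Subset.antisymm ?_ (subset_preimage_image _ _)
    rintro A ⟨B, hB, hBA⟩
    exact eq_of_SFnQ_eq (hWF1.notMem_of_mem_left hB) hBA ▸ hB
  rw [← isQuotientMap_quotient_mk'.isOpen_preimage]
  exact hsat.symm ▸ hW

noncomputable def pairFn (hn : 2 ≤ n) {x y : X} (hxy : x ≠ y) : Fn X n :=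
  ⟨⟨⟨{x, y}, ((finite_singleton y).insert x).isCompact⟩, insert_nonempty x {y}⟩,
    (finite_singleton y).insert x, (ncard_pair hxy).trans_le hn⟩

theorem pairFn_coe (hn : 2 ≤ n) {x y : X} (hxy : x ≠ y) :
    ((pairFn hn hxy).1 : Set X) = {x, y} := rfl

theorem pairFn_notMem_F1 (hn : 2 ≤ n) {x y : X} (hxy : x ≠ y) : pairFn hn hxy ∉ F1 X n := by
  rintro ⟨w, hw⟩
  have hcard := congrArg ncard hw
  rw [pairFn_coe, ncard_pair hxy, ncard_singleton] at hcard
  exact absurd hcard (by norm_num)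

theorem StronglyTransitive.of_SFnMap [Nontrivial X] (hX : Preperfect (univ : Set X)) (hn : 2 ≤ n)
    {f : X → X} (hT : StronglyTransitive (SFnMap X n f)) : StronglyTransitive f := by
  intro U hU ⟨u, hu⟩
  set W : Set (Fn X n) := {A | (A.1 : Set X) ⊆ U} \ F1 X n
  obtain ⟨v, ⟨hvU, -⟩, hvu⟩ := preperfect_iff_nhds.1 hX u trivial U (hU.mem_nhds hu)
  have huv : pairFn hn hvu.symm ∈ W :=
    ⟨by rw [mem_ofPred_eq, pairFn_coe]; exact insert_subset hu (singleton_subset_iff.2 hvU),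
      pairFn_notMem_F1 hn _⟩
  obtain ⟨M, hM, hcov⟩ := hT _
    (isOpen_SFnQ_image ((isOpen_setOf_coe_subset hU).sdiff isClosed_F1) disjoint_sdiff_left)
    ⟨_, mem_image_of_mem _ huv⟩
  refine ⟨M, hM, eq_univ_of_forall fun x => ?_⟩
  obtain ⟨z, hzx⟩ := exists_ne x
  have hxz : SFnQ X n (pairFn hn hzx.symm) ∈
      ⋃ i ∈ Finset.Icc 1 M, (SFnMap X n f)^[i] '' (SFnQ X n '' W) :=
    hcov ▸ mem_univ _
  simp only [mem_iUnion] at hxz ⊢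
  obtain ⟨i, hi, _, ⟨B, hB, rfl⟩, hBxz⟩ := hxz
  rw [← (semiconj_SFnQ_FnMap f).iterate_right] at hBxz
  have hfiB : f^[i] '' (B.1 : Set X) = {x, z} := by
    rw [← FnMap_iterate_coe, ← eq_of_SFnQ_eq (pairFn_notMem_F1 hn hzx.symm) hBxz.symm,
      pairFn_coe]
  exact ⟨i, hi, image_mono hB.1 (hfiB ▸ mem_insert x {z})⟩

end

theorem stmt19_general (X : Type*) [MetricSpace X] [Nontrivial X]
    (hX : Perfect (Set.univ : Set X))
    (n : ℕ) (hn : 2 ≤ n) (f : X → X) :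
    (StronglyTransitive (FnMap X n f) → StronglyTransitive (SFnMap X n f)) ∧
    (StronglyTransitive (SFnMap X n f) → StronglyTransitive f) :=
  ⟨StronglyTransitive.of_semiconj continuous_quotient_mk' Quotient.mk_surjective
      (semiconj_SFnQ_FnMap f),
    StronglyTransitive.of_SFnMap hX.2 hn⟩

theorem stmt19 (X : Type*) [MetricSpace X] [CompactSpace X] [Nontrivial X]
    (hX : Perfect (Set.univ : Set X))
    (n : ℕ) (hn : 2 ≤ n) (f : X → X) (hf : Continuous f) :
    (StronglyTransitive (FnMap X n f) → StronglyTransitive (SFnMap X n f)) ∧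
    (StronglyTransitive (SFnMap X n f) → StronglyTransitive f) :=
  stmt19_general X hX n hn f
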